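/- arXiv:2201.03219 — 2 statements merged into one kernel-verified Lean document; each statement's English description precedes it below -/
import Mathlib

section
/- If (x, y, φ) is a fixed point of the improved Chialvo map with a ≠ 1 and k₂ ≠ −1, then x satisfies the scalar equation x² e^{((b−a+1)x − c)/(a−1)} + k₀ + 3kβk₁²x³/(1+k₂)² + kαx = x. Conversely, if x satisfies this equation, then (x, (bx−c)/(a−1), k₁x/(1+k₂)) is a fixed point of the map. -/
/-- The improved Chialvo map under electromagnetic flux. -/
noncomputable def chialvoEM (a b c k₀ k α β k₁ k₂ : ℝ) : ℝ × ℝ × ℝ → ℝ × ℝ × ℝ :=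
  fun p => (p.1 ^ 2 * Real.exp (p.2.1 - p.1) + k₀ + k * p.1 * (α + 3 * β * p.2.2 ^ 2),
            a * p.2.1 - b * p.1 + c,
            k₁ * p.1 - k₂ * p.2.2)

theorem fixed_point_transcendental (a b c k₀ k α β k₁ k₂ : ℝ)
    (ha : a ≠ 1) (hk₂ : k₂ ≠ -1) :
    (∀ x y φ : ℝ, chialvoEM a b c k₀ k α β k₁ k₂ (x, y, φ) = (x, y, φ) →
      x ^ 2 * Real.exp (((b - a + 1) * x - c) / (a - 1)) + k₀
        + 3 * k * β * k₁ ^ 2 * x ^ 3 / (1 + k₂) ^ 2 + k * α * x = x) ∧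
    (∀ x : ℝ,
      x ^ 2 * Real.exp (((b - a + 1) * x - c) / (a - 1)) + k₀
        + 3 * k * β * k₁ ^ 2 * x ^ 3 / (1 + k₂) ^ 2 + k * α * x = x →
      chialvoEM a b c k₀ k α β k₁ k₂ (x, (b * x - c) / (a - 1), k₁ * x / (1 + k₂))
        = (x, (b * x - c) / (a - 1), k₁ * x / (1 + k₂))) := by
  have ha1 : a - 1 ≠ 0 := sub_ne_zero.mpr ha
  have hk : 1 + k₂ ≠ 0 := by intro h; apply hk₂; linarith
  constructor
  · intro x y φ h
    simp only [chialvoEM, Prod.mk.injEq] at h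
    obtain ⟨h1, h2, h3⟩ := h
    have hφ : φ = k₁ * x / (1 + k₂) := by field_simp; linarith
    have hyx : y - x = ((b - a + 1) * x - c) / (a - 1) := by
      have hy : y * (a - 1) = b * x - c := by linarith
      field_simp
      linarith
    rw [hyx, hφ, div_pow] at h1
    linear_combination h1
  · intro x hx
    simp only [chialvoEM, Prod.mk.injEq]
    have hyx : (b * x - c) / (a - 1) - x = ((b - a + 1) * x - c) / (a - 1) := by
      field_simp; ring
    refine ⟨?_, ?_, ?_⟩
    · rw [hyx, div_pow]; linear_combination hx
    · field_simp; ring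
    · field_simp; ring
end

section
/- For the two-dimensional Chialvo map with 0 < a < 1, 0 < b < 1, and any c, k₀ ∈ ℝ, the map F(x,y) = (x²e^{y−x} + k₀, ay − bx + c) is not injective on ℝ². -/
theorem chialvo2_not_injective (a b c k₀ : ℝ)
    (ha : 0 < a) (ha1 : a < 1) (hb : 0 < b) (hb1 : b < 1) :
    ¬ Function.Injective (fun p : ℝ × ℝ =>
      (p.1 ^ 2 * Real.exp (p.2 - p.1) + k₀, a * p.2 - b * p.1 + c)) := by
  intro hinj
  by_cases hab : a = b
  · have h := hinj (a₁ := ((1 : ℝ), (0 : ℝ))) (a₂ := ((-1 : ℝ), (-2 : ℝ)))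
      (by
        simp only [Prod.mk.injEq]
        constructor
        · norm_num
        · subst hab; ring)
    rw [Prod.mk.injEq] at h
    norm_num at h
  · have ha0 : a ≠ 0 := ne_of_gt ha
    have hab0 : a - b ≠ 0 := sub_ne_zero.mpr hab
    have hlog : Real.log 2 ≠ 0 := by
      have := Real.log_pos (by norm_num : (1:ℝ) < 2)
      linarith
    set x : ℝ := 2 * a * Real.log 2 / (a - b) with hx
    have hx0 : x ≠ 0 := by
      rw [hx]
      exact div_ne_zero (mul_ne_zero (mul_ne_zero two_ne_zero ha0) hlog) hab0
    have hkey : b / a * x - 2 * x = -x + -(2 * Real.log 2) := by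
      rw [hx]
      field_simp
      ring
    have hexp4 : Real.exp (-(2 * Real.log 2)) = 1 / 4 := by
      rw [Real.exp_neg, show (2 : ℝ) * Real.log 2 = Real.log 2 + Real.log 2 by ring,
        Real.exp_add, Real.exp_log two_pos]
      norm_num
    have h := hinj (a₁ := (x, (0 : ℝ))) (a₂ := (2 * x, b / a * x))
      (by
        simp only [Prod.mk.injEq]
        constructor
        · rw [hkey, Real.exp_add, hexp4, zero_sub]
          ring
        · field_simp
          ring)
    rw [Prod.mk.injEq] at h
    have h1 : x = 2 * x := h.1
    exact hx0 (by linarith)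
end
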